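/- Let T₁, T₂ ∈ B_A(H). Then w_𝔸([[T₁, T₂],[O, O]]) ≥ (1/2)·max{ w_A(T₁ + iT₂), w_A(T₁ − iT₂) }. -/

import Mathlib

noncomputable section

open ContinuousLinearMap

/-- The semi-inner product induced by a positive operator `A`: `⟪x, y⟫_A = ⟪A x, y⟫`. -/
def sInnerA {E : Type*} [NormedAddCommGroup E] [InnerProductSpace ℂ E]
    (A : E →L[ℂ] E) (x y : E) : ℂ :=
  inner ℂ (A x) y

/-- The seminorm induced by `A`: `‖x‖_A = √(re ⟪A x, x⟫)`. -/
def sNormA {E : Type*} [NormedAddCommGroup E] [InnerProductSpace ℂ E]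
    (A : E →L[ℂ] E) (x : E) : ℝ :=
  Real.sqrt (sInnerA A x x).re

/-- The `A`-operator seminorm: `sup {‖T x‖_A : x ∈ closure (range A), ‖x‖_A = 1}`. -/
def opNormA {E : Type*} [NormedAddCommGroup E] [InnerProductSpace ℂ E]
    (A T : E →L[ℂ] E) : ℝ :=
  sSup {r | ∃ x ∈ closure (Set.range A), sNormA A x = 1 ∧ r = sNormA A (T x)}

/-- The `A`-numerical radius: `sup {|⟪T x, x⟫_A| : ‖x‖_A = 1}`. -/
def wA {E : Type*} [NormedAddCommGroup E] [InnerProductSpace ℂ E]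
    (A T : E →L[ℂ] E) : ℝ :=
  sSup {r | ∃ x, sNormA A x = 1 ∧ r = ‖sInnerA A (T x) x‖}

/-- The `A`-Crawford number: `inf {|⟪T x, x⟫_A| : ‖x‖_A = 1}`. -/
def cA {E : Type*} [NormedAddCommGroup E] [InnerProductSpace ℂ E]
    (A T : E →L[ℂ] E) : ℝ :=
  sInf {r | ∃ x, sNormA A x = 1 ∧ r = ‖sInnerA A (T x) x‖}

/-- `T ∈ B_A(H)`, i.e. the range of `T* A` is contained in the range of `A`. -/
def memBA {E : Type*} [NormedAddCommGroup E] [InnerProductSpace ℂ E] [CompleteSpace E]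
    (A T : E →L[ℂ] E) : Prop :=
  Set.range ((adjoint T) ∘L A) ⊆ Set.range A

/-- `S` is the distinguished `A`-adjoint `T^{#_A}` of `T`:
`A ∘ S = T* ∘ A` and `R(S) ⊆ closure (R(A))`. -/
def IsSharpA {E : Type*} [NormedAddCommGroup E] [InnerProductSpace ℂ E] [CompleteSpace E]
    (A T S : E →L[ℂ] E) : Prop :=
  A ∘L S = (adjoint T) ∘L A ∧ Set.range S ⊆ closure (Set.range A)

/-- The `2 × 2` operator matrix `[[X, Y], [Z, W]]` acting blockwise on
the Hilbert space direct sum `H ⊕ H`. -/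
def blk2 {H : Type*} [NormedAddCommGroup H] [InnerProductSpace ℂ H]
    (X Y Z W : H →L[ℂ] H) : WithLp 2 (H × H) →L[ℂ] WithLp 2 (H × H) :=
  ((WithLp.prodContinuousLinearEquiv 2 ℂ H H).symm : (H × H) →L[ℂ] WithLp 2 (H × H)) ∘L
    ((X ∘L ContinuousLinearMap.fst ℂ H H + Y ∘L ContinuousLinearMap.snd ℂ H H).prod
      (Z ∘L ContinuousLinearMap.fst ℂ H H + W ∘L ContinuousLinearMap.snd ℂ H H)) ∘L
    ((WithLp.prodContinuousLinearEquiv 2 ℂ H H) : WithLp 2 (H × H) →L[ℂ] H × H)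

/-! For `‖ε‖ = 1` and `‖x‖_A = 1`, the vector `(x, ε x) / √2` is an `𝔸`-unit vector at which
`⟪[[T₁, T₂], [O, O]] u, u⟫_𝔸 = ½ ⟪(T₁ + ε T₂) x, x⟫_A`; the choices `ε = ± i` give the theorem.

Since `sSup` of an unbounded set of reals is `0`, this needs the `𝔸`-numerical range to be bounded,
i.e. that operators of `B_A(H)` are `A`-bounded. By Douglas' factorization `T* A = A S` with `S`
bounded, `R = S T` is `A`-symmetric, and iterating Cauchy–Schwarz,
`‖R^(2^k) x‖_A ^ 2 ≤ ‖x‖_A ‖R^(2^(k+1)) x‖_A`, gives `‖R x‖_A ≤ ‖R‖ ‖x‖_A`.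
Hence `‖T x‖_A ^ 2 = ⟪x, R x⟫_A ≤ ‖R‖ ‖x‖_A ^ 2`. -/

theorem le_mul_of_sq_le_mul_succ {a r M : ℝ} {b : ℕ → ℝ} (ha : 0 ≤ a) (hr : 0 ≤ r)
    (hb : ∀ k, 0 ≤ b k) (hstep : ∀ k, b k ^ 2 ≤ a * b (k + 1))
    (hgrowth : ∀ k, b k ≤ M * r ^ 2 ^ k) : b 0 ≤ a * r := by
  rcases ha.eq_or_lt with rfl | ha
  · nlinarith [hstep 0, hb 0]
  have hiter : ∀ n, a * b 0 ^ 2 ^ n ≤ a ^ 2 ^ n * b n := by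
    intro n
    induction n with
    | zero => simp
    | succ n ih =>
      refine le_of_mul_le_mul_left ?_ ha
      calc a * (a * b 0 ^ 2 ^ (n + 1)) = (a * b 0 ^ 2 ^ n) ^ 2 := by ring
        _ ≤ (a ^ 2 ^ n * b n) ^ 2 := pow_le_pow_left₀ (mul_nonneg ha.le (pow_nonneg (hb 0) _)) ih 2
        _ = a ^ 2 ^ (n + 1) * b n ^ 2 := by ring
        _ ≤ a ^ 2 ^ (n + 1) * (a * b (n + 1)) := by gcongr; exact hstep n
        _ = a * (a ^ 2 ^ (n + 1) * b (n + 1)) := by ring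
  by_contra! hlt
  have hb0 : 0 < b 0 := lt_of_le_of_lt (mul_nonneg ha.le hr) hlt
  set q := a * r / b 0
  have hq0 : 0 ≤ q := by positivity
  have hq1 : q < 1 := (div_lt_one hb0).2 hlt
  have hbound : ∀ n, a ≤ M * q ^ 2 ^ n := by
    intro n
    have hpos : 0 < b 0 ^ 2 ^ n := by positivity
    rw [div_pow, mul_div_assoc', le_div_iff₀ hpos]
    calc a * b 0 ^ 2 ^ n ≤ a ^ 2 ^ n * b n := hiter n
      _ ≤ a ^ 2 ^ n * (M * r ^ 2 ^ n) := by gcongr; exact hgrowth n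
      _ = M * (a * r) ^ 2 ^ n := by ring
  have hM : 0 < M := by
    by_contra! hM
    linarith [hbound 0, mul_nonpos_of_nonpos_of_nonneg hM (pow_nonneg hq0 (2 ^ 0))]
  obtain ⟨n, hn⟩ := exists_pow_lt_of_lt_one (div_pos ha hM) hq1
  have hle : q ^ 2 ^ n ≤ q ^ n := pow_le_pow_of_le_one hq0 hq1.le (Nat.lt_two_pow_self).le
  rw [lt_div_iff₀ hM] at hn
  linarith [hbound n, mul_le_mul_of_nonneg_left hle hM.le]

theorem exists_comp_eq_of_range_subset {𝕜 E F G : Type*} [RCLike 𝕜]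
    [NormedAddCommGroup E] [InnerProductSpace 𝕜 E] [CompleteSpace E]
    [NormedAddCommGroup F] [NormedSpace 𝕜 F] [NormedAddCommGroup G] [NormedSpace 𝕜 G]
    [CompleteSpace G] (A : E →L[𝕜] F) (f : G →L[𝕜] F) (h : Set.range f ⊆ Set.range A) :
    ∃ S : G →L[𝕜] E, A ∘L S = f := by
  set N := LinearMap.ker (A : E →ₗ[𝕜] F)
  have : CompleteSpace N := (A.isClosed_ker).completeSpace_coe
  obtain ⟨g, hg⟩ := Module.projective_lifting_property (A : E →ₗ[𝕜] F).rangeRestrict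
    ((f : G →ₗ[𝕜] F).codRestrict _ fun y => h ⟨y, rfl⟩) (LinearMap.surjective_rangeRestrict _)
  have hAg : ∀ y, A (g y) = f y := fun y => congrArg Subtype.val (LinearMap.congr_fun hg y)
  -- removing the component in `ker A` makes the lift unique, hence closed
  set S : G →ₗ[𝕜] E := g - (N.starProjection : E →ₗ[𝕜] E) ∘ₗ g
  have hAS : ∀ y, A (S y) = f y := fun y => by
    have h0 : A (N.starProjection (g y)) = 0 := N.starProjection_apply_mem (g y)
    simp [S, hAg, h0]
  have hSN : ∀ y, S y ∈ Nᗮ := fun y => N.sub_starProjection_mem_orthogonal (g y)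
  refine ⟨⟨S, S.continuous_of_seq_closed_graph fun u x y hu hSu => ?_⟩,
    ContinuousLinearMap.ext hAS⟩
  have hAy : A y = A (S x) := by
    refine tendsto_nhds_unique ((A.continuous.tendsto y).comp hSu) ?_
    simpa [Function.comp_def, hAS] using (f.continuous.tendsto x).comp hu
  have hyN : y ∈ Nᗮ := N.isClosed_orthogonal.mem_of_tendsto hSu
    (Filter.Eventually.of_forall fun n => hSN (u n))
  have hker : y - S x ∈ N := by simp [N, hAy]
  exact sub_eq_zero.1 ((Submodule.orthogonal_disjoint N).le_bot ⟨hker, Nᗮ.sub_mem hyN (hSN x)⟩)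

section NumericalRadius

variable {E : Type*} [NormedAddCommGroup E] [InnerProductSpace ℂ E] {A T : E →L[ℂ] E}

theorem wA_le {c : ℝ} (hc : 0 ≤ c) (h : ∀ x, sNormA A x = 1 → ‖sInnerA A (T x) x‖ ≤ c) :
    wA A T ≤ c :=
  Real.sSup_le (by rintro _ ⟨x, hx, rfl⟩; exact h x hx) hc

theorem le_wA (hbdd : BddAbove {r | ∃ x, sNormA A x = 1 ∧ r = ‖sInnerA A (T x) x‖}) {x : E}
    (hx : sNormA A x = 1) : ‖sInnerA A (T x) x‖ ≤ wA A T :=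
  le_csSup hbdd ⟨x, hx, rfl⟩

theorem wA_nonneg : 0 ≤ wA A T :=
  Real.sSup_nonneg (by rintro _ ⟨x, -, rfl⟩; exact norm_nonneg _)

end NumericalRadius

section SemiInner

variable {H : Type*} [NormedAddCommGroup H] [InnerProductSpace ℂ H] {A : H →L[ℂ] H}

theorem sNormA_sq (hA : A.IsPositive) (x : H) : sNormA A x ^ 2 = (sInnerA A x x).re :=
  Real.sq_sqrt (hA.re_inner_nonneg_left x)

theorem sNormA_nonneg (x : H) : 0 ≤ sNormA A x := Real.sqrt_nonneg _

variable [CompleteSpace H]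

theorem sInnerA_eq_inner_sqrt (hA : A.IsPositive) (x y : H) :
    sInnerA A x y = inner ℂ (CFC.sqrt A x) (CFC.sqrt A y) := by
  have hA0 : 0 ≤ A := (nonneg_iff_isPositive A).2 hA
  calc sInnerA A x y = inner ℂ ((CFC.sqrt A * CFC.sqrt A) x) y := by
        rw [CFC.sqrt_mul_sqrt_self A]; rfl
    _ = inner ℂ (CFC.sqrt A (CFC.sqrt A x)) y := rfl
    _ = inner ℂ (CFC.sqrt A x) (CFC.sqrt A y) := by
        rw [← adjoint_inner_right, (CFC.sqrt_nonneg A).isSelfAdjoint.adjoint_eq]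

theorem sNormA_eq_norm_sqrt (hA : A.IsPositive) (x : H) : sNormA A x = ‖CFC.sqrt A x‖ := by
  rw [sNormA, sInnerA_eq_inner_sqrt hA, ← Real.sqrt_sq (norm_nonneg (CFC.sqrt A x)),
    ← inner_self_eq_norm_sq (𝕜 := ℂ)]
  rfl

theorem sNormA_smul (hA : A.IsPositive) (c : ℂ) (x : H) :
    sNormA A (c • x) = ‖c‖ * sNormA A x := by
  rw [sNormA_eq_norm_sqrt hA, sNormA_eq_norm_sqrt hA, map_smul, norm_smul]

theorem norm_sInnerA_le (hA : A.IsPositive) (x y : H) :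
    ‖sInnerA A x y‖ ≤ sNormA A x * sNormA A y := by
  rw [sInnerA_eq_inner_sqrt hA, sNormA_eq_norm_sqrt hA, sNormA_eq_norm_sqrt hA]
  exact norm_inner_le_norm _ _

theorem sInnerA_pow_apply {R : H →L[ℂ] H} (hR : A * R = adjoint R * A) (n : ℕ) (x y : H) :
    sInnerA A ((R ^ n) x) y = sInnerA A x ((R ^ n) y) := by
  have hRn : A * R ^ n = adjoint (R ^ n) * A := by
    rw [← star_eq_adjoint, star_pow]
    exact (SemiconjBy.pow_right (x := R) (y := star R) (by rwa [star_eq_adjoint]) n).eq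
  calc sInnerA A ((R ^ n) x) y = inner ℂ ((A * R ^ n) x) y := rfl
    _ = sInnerA A x ((R ^ n) y) := by rw [hRn, mul_apply_eq_comp, adjoint_inner_left]; rfl

theorem sNormA_apply_le_of_mul_eq_adjoint_mul (hA : A.IsPositive) {R : H →L[ℂ] H}
    (hR : A * R = adjoint R * A) (x : H) : sNormA A (R x) ≤ ‖R‖ * sNormA A x := by
  have hb0 : sNormA A (R x) = sNormA A ((R ^ 2 ^ 0) x) := by rw [pow_zero, pow_one]
  rw [hb0, mul_comm]
  refine le_mul_of_sq_le_mul_succ (b := fun k => sNormA A ((R ^ 2 ^ k) x))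
    (M := ‖CFC.sqrt A‖ * ‖x‖) (sNormA_nonneg x) (norm_nonneg R) (fun k => sNormA_nonneg _)
    (fun k => ?_) (fun k => ?_)
  · have hsq : (R ^ 2 ^ k) ((R ^ 2 ^ k) x) = (R ^ 2 ^ (k + 1)) x := by
      rw [← mul_apply_eq_comp, ← pow_add, ← two_mul, pow_succ']
    calc sNormA A ((R ^ 2 ^ k) x) ^ 2 = (sInnerA A x ((R ^ 2 ^ (k + 1)) x)).re := by
          rw [sNormA_sq hA, sInnerA_pow_apply hR, hsq]
      _ ≤ ‖sInnerA A x ((R ^ 2 ^ (k + 1)) x)‖ := Complex.re_le_norm _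
      _ ≤ sNormA A x * sNormA A ((R ^ 2 ^ (k + 1)) x) := norm_sInnerA_le hA _ _
  · calc sNormA A ((R ^ 2 ^ k) x) ≤ ‖CFC.sqrt A‖ * ‖(R ^ 2 ^ k) x‖ := by
          rw [sNormA_eq_norm_sqrt hA]; exact le_opNorm _ _
      _ ≤ ‖CFC.sqrt A‖ * (‖R‖ ^ 2 ^ k * ‖x‖) := by
          gcongr
          exact (le_opNorm _ _).trans (by gcongr; exact norm_pow_le' R (Nat.two_pow_pos k))
      _ = ‖CFC.sqrt A‖ * ‖x‖ * ‖R‖ ^ 2 ^ k := by ring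

theorem norm_sInnerA_apply_le (hA : A.IsPositive) {T : H →L[ℂ] H} {C : ℝ} (hC : 0 ≤ C)
    (hT : ∀ x, sNormA A (T x) ≤ C * sNormA A x) {x y : H} (hx : sNormA A x ≤ 1)
    (hy : sNormA A y ≤ 1) : ‖sInnerA A (T x) y‖ ≤ C :=
  calc ‖sInnerA A (T x) y‖ ≤ sNormA A (T x) * sNormA A y := norm_sInnerA_le hA _ _
    _ ≤ (C * 1) * 1 := by
        gcongr
        · exact sNormA_nonneg _
        · exact (hT x).trans (by gcongr)
    _ = C := by ring

theorem exists_sNormA_apply_le_of_memBA (hA : A.IsPositive) {T : H →L[ℂ] H}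
    (hT : memBA A T) : ∃ C, 0 ≤ C ∧ ∀ x, sNormA A (T x) ≤ C * sNormA A x := by
  obtain ⟨S, hS⟩ := exists_comp_eq_of_range_subset A (adjoint T ∘L A) hT
  have hAS : A * S = adjoint T * A := hS
  have hSA : adjoint S * A = A * T := by
    simpa [← star_eq_adjoint, hA.isSelfAdjoint.star_eq] using congrArg star hAS
  -- `R = S T` is symmetric for the `A`-semi-inner product, and `‖T x‖_A ^ 2 = ⟪x, R x⟫_A`
  have hR : A * (S * T) = adjoint (S * T) * A := by
    rw [← mul_assoc, hAS, mul_assoc, ← hSA, ← mul_assoc, ← star_eq_adjoint, ← star_eq_adjoint,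
      ← star_eq_adjoint, star_mul]
  refine ⟨Real.sqrt ‖S * T‖, Real.sqrt_nonneg _, fun x => ?_⟩
  have hsq : sNormA A (T x) ^ 2 ≤ ‖S * T‖ * sNormA A x ^ 2 := by
    calc sNormA A (T x) ^ 2 = (sInnerA A x ((S * T) x)).re := by
          rw [sNormA_sq hA, sInnerA, ← mul_apply_eq_comp A T, ← hSA, mul_apply_eq_comp,
            adjoint_inner_left]; rfl
      _ ≤ sNormA A x * sNormA A ((S * T) x) :=
          (Complex.re_le_norm _).trans (norm_sInnerA_le hA _ _)
      _ ≤ sNormA A x * (‖S * T‖ * sNormA A x) := by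
          gcongr
          · exact sNormA_nonneg x
          · exact sNormA_apply_le_of_mul_eq_adjoint_mul hA hR x
      _ = ‖S * T‖ * sNormA A x ^ 2 := by ring
  rw [← Real.sqrt_sq (sNormA_nonneg (T x)), ← Real.sqrt_sq (sNormA_nonneg x),
    ← Real.sqrt_mul (norm_nonneg _)]
  exact Real.sqrt_le_sqrt hsq

end SemiInner

section Block

variable {H : Type*} [NormedAddCommGroup H] [InnerProductSpace ℂ H]

@[simp]
theorem blk2_apply (X Y Z W : H →L[ℂ] H) (u : WithLp 2 (H × H)) :
    blk2 X Y Z W u = WithLp.toLp 2 (X u.fst + Y u.snd, Z u.fst + W u.snd) := rfl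

theorem sInnerA_blk2_diag (A : H →L[ℂ] H) (u v : WithLp 2 (H × H)) :
    sInnerA (blk2 A 0 0 A) u v = sInnerA A u.fst v.fst + sInnerA A u.snd v.snd := by
  simp [sInnerA]

theorem sInnerA_blk2_diag_blk2_row (A T₁ T₂ : H →L[ℂ] H) (u : WithLp 2 (H × H)) :
    sInnerA (blk2 A 0 0 A) (blk2 T₁ T₂ 0 0 u) u = sInnerA A (T₁ u.fst + T₂ u.snd) u.fst := by
  simp [sInnerA, inner_add_left]

theorem sNormA_blk2_diag_sq {A : H →L[ℂ] H} (hA : A.IsPositive) (u : WithLp 2 (H × H)) :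
    sNormA (blk2 A 0 0 A) u ^ 2 = sNormA A u.fst ^ 2 + sNormA A u.snd ^ 2 := by
  rw [sNormA_sq hA, sNormA_sq hA, sNormA, sInnerA_blk2_diag, Complex.add_re]
  exact Real.sq_sqrt (add_nonneg (hA.re_inner_nonneg_left _) (hA.re_inner_nonneg_left _))

variable [CompleteSpace H]

theorem bddAbove_wA_blk2_row {A T₁ T₂ : H →L[ℂ] H} (hA : A.IsPositive) {C₁ C₂ : ℝ}
    (hC₁ : 0 ≤ C₁) (hC₂ : 0 ≤ C₂) (hT₁ : ∀ x, sNormA A (T₁ x) ≤ C₁ * sNormA A x)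
    (hT₂ : ∀ x, sNormA A (T₂ x) ≤ C₂ * sNormA A x) :
    BddAbove {r | ∃ u, sNormA (blk2 A 0 0 A) u = 1 ∧
      r = ‖sInnerA (blk2 A 0 0 A) (blk2 T₁ T₂ 0 0 u) u‖} := by
  refine ⟨C₁ + C₂, ?_⟩
  rintro _ ⟨u, hu, rfl⟩
  have hsq := sNormA_blk2_diag_sq hA u
  rw [hu] at hsq
  have h0₁ := sNormA_nonneg (A := A) u.fst
  have h0₂ := sNormA_nonneg (A := A) u.snd
  have h₁ : sNormA A u.fst ≤ 1 := by nlinarith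
  have h₂ : sNormA A u.snd ≤ 1 := by nlinarith
  rw [sInnerA_blk2_diag_blk2_row]
  calc ‖sInnerA A (T₁ u.fst + T₂ u.snd) u.fst‖
      = ‖sInnerA A (T₁ u.fst) u.fst + sInnerA A (T₂ u.snd) u.fst‖ := by
        simp only [sInnerA, map_add, inner_add_left]
    _ ≤ C₁ + C₂ := (norm_add_le _ _).trans
      (add_le_add (norm_sInnerA_apply_le hA hC₁ hT₁ h₁ h₁) (norm_sInnerA_apply_le hA hC₂ hT₂ h₂ h₁))

theorem wA_add_smul_le_two_mul_wA_blk2 {A T₁ T₂ : H →L[ℂ] H} (hA : A.IsPositive)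
    (hbdd : BddAbove {r | ∃ u, sNormA (blk2 A 0 0 A) u = 1 ∧
      r = ‖sInnerA (blk2 A 0 0 A) (blk2 T₁ T₂ 0 0 u) u‖}) {ε : ℂ} (hε : ‖ε‖ = 1) :
    wA A (T₁ + ε • T₂) ≤ 2 * wA (blk2 A 0 0 A) (blk2 T₁ T₂ 0 0) := by
  refine wA_le (mul_nonneg zero_le_two wA_nonneg) fun x hx => ?_
  set t : ℝ := (Real.sqrt 2)⁻¹
  have ht : t ^ 2 = 1 / 2 := by simp [t, inv_pow]
  have htn : ‖(t : ℂ)‖ = t := by simp [t]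
  set u : WithLp 2 (H × H) := WithLp.toLp 2 ((t : ℂ) • x, (ε * t) • x)
  have hu : sNormA (blk2 A 0 0 A) u = 1 := by
    have hsq := sNormA_blk2_diag_sq hA u
    simp only [u, WithLp.toLp_fst, WithLp.toLp_snd, sNormA_smul hA, norm_mul, hε, htn, hx] at hsq
    refine (pow_left_inj₀ (sNormA_nonneg _) zero_le_one two_ne_zero).1 ?_
    linear_combination hsq + 2 * ht
  have hval : sInnerA (blk2 A 0 0 A) (blk2 T₁ T₂ 0 0 u) u =
      ((t ^ 2 : ℝ) : ℂ) * sInnerA A ((T₁ + ε • T₂) x) x := by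
    have hrow : T₁ u.fst + T₂ u.snd = (t : ℂ) • (T₁ + ε • T₂) x := by
      simp [u, smul_smul, mul_comm]
    have hfst : u.fst = (t : ℂ) • x := rfl
    rw [sInnerA_blk2_diag_blk2_row, hrow, hfst, sInnerA, map_smul, inner_smul_left,
      inner_smul_right, Complex.conj_ofReal, ← mul_assoc, ← Complex.ofReal_mul, ← sq]
    rfl
  have := le_wA hbdd hu
  rw [hval, norm_mul, ht, Complex.norm_real, Real.norm_of_nonneg (by norm_num)] at this
  linarith

end Block

theorem stmt10 {H : Type*} [NormedAddCommGroup H] [InnerProductSpace ℂ H] [CompleteSpace H]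
    (A : H →L[ℂ] H) (hA : A.IsPositive)
    (T₁ T₂ : H →L[ℂ] H) (hT₁ : memBA A T₁) (hT₂ : memBA A T₂) :
    wA (blk2 A 0 0 A) (blk2 T₁ T₂ 0 0) ≥
      (1 / 2) * max (wA A (T₁ + Complex.I • T₂)) (wA A (T₁ - Complex.I • T₂)) := by
  obtain ⟨C₁, hC₁, h₁⟩ := exists_sNormA_apply_le_of_memBA hA hT₁
  obtain ⟨C₂, hC₂, h₂⟩ := exists_sNormA_apply_le_of_memBA hA hT₂
  have hbdd := bddAbove_wA_blk2_row hA hC₁ hC₂ h₁ h₂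
  have hplus := wA_add_smul_le_two_mul_wA_blk2 hA hbdd (ε := Complex.I) (by simp)
  have hminus := wA_add_smul_le_two_mul_wA_blk2 hA hbdd (ε := -Complex.I) (by simp)
  rw [neg_smul, ← sub_eq_add_neg] at hminus
  linarith [max_le hplus hminus]
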